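/- Let X > 0 be real and set ζ = X/(1+X). For ε ∈ (0,2) define Φ(ε) = ∑_{m≥0} (ε/2)_m (1−ε/2)_m / ((3/2)_m m!) · ζ^m (a convergent series). Then lim_{ε→0⁺} [ Γ(1+ε) (16π)^{ε−1} / (2πε) · (1+X)^{−ε/2} · Φ(ε) − 1/(32π²ε) ] = (1/(32π²)) · ( 1 − γ − log( √(1+X) / (16π) ) − arctan(√X)/√X ), where γ is the Euler–Mascheroni constant. -/

import Mathlib

/-!
Since `(ε/2)_{m+1} = (ε/2) (1 + ε/2)_m`, we have `Φ(ε) = 1 + ε Ψ(ε)`, where `Ψ` is a power series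
in `ζ = X/(1+X)` whose coefficients are polynomials in `ε`, bounded by `1` for `0 < ε < 2`; by
dominated convergence `Ψ(ε) → Ψ(0)`. With `b = √(1+X)/(16π)` the prefactor equals
`Γ(1+ε) b^{-ε} / (32π² ε)`, so the finite part is `(d/dε) Γ(1+ε) b^{-ε}` at `0`, i.e. `-γ - log b`,
plus `Ψ(0)`. Finally `Ψ(0) = ∑ ζ^{k+1} k! / (2 (3/2)_{k+1})`, whose coefficients are the Beta
integrals `∫₀¹ t^k √(1-t) dt`; summing the geometric series under the integral gives
`Ψ(0) = ∫₀¹ X √(1-t) / (2 (1 + X(1-t))) dt = 1 - arctan √X / √X`.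
-/

/-- Pochhammer symbol (rising factorial) for a real argument. -/
noncomputable def poch (x : ℝ) (n : ℕ) : ℝ := (ascPochhammer ℝ n).eval x

/-- `Φ(ε) = ₂F₁(ε/2, 1−ε/2; 3/2; ζ)` with `ζ = X/(1+X)`. -/
noncomputable def Phi (X ε : ℝ) : ℝ :=
  ∑' m : ℕ, poch (ε / 2) m * poch (1 - ε / 2) m /
    (poch (3 / 2) m * (Nat.factorial m : ℝ)) * (X / (1 + X)) ^ m

open Real Filter Topology
open scoped Nat

lemma poch_zero (x : ℝ) : poch x 0 = 1 := by simp [poch]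

lemma poch_succ (x : ℝ) (n : ℕ) : poch x (n + 1) = poch x n * (x + n) := by
  simp [poch, ascPochhammer_succ_right]

lemma poch_succ' (x : ℝ) (n : ℕ) : poch x (n + 1) = x * poch (x + 1) n := by
  simp [poch, ascPochhammer_succ_left, Polynomial.eval_comp]

lemma poch_pos {x : ℝ} (hx : 0 < x) (n : ℕ) : 0 < poch x n := ascPochhammer_pos n x hx

lemma poch_one (n : ℕ) : poch 1 n = n ! := ascPochhammer_eval_one ℝ n

lemma poch_two (n : ℕ) : poch 2 n = (n + 1)! := by
  simpa [poch, add_comm, one_add_one_eq_two] using factorial_mul_ascPochhammer ℝ 1 n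

lemma poch_le_poch {x y : ℝ} (hx : 0 < x) (hxy : x ≤ y) (n : ℕ) : poch x n ≤ poch y n := by
  induction n with
  | zero => simp [poch_zero]
  | succ n ih =>
    rw [poch_succ, poch_succ]
    exact mul_le_mul ih (by linarith) (by positivity) (poch_pos (hx.trans_le hxy) n).le

@[fun_prop]
lemma continuous_poch (n : ℕ) : Continuous fun x => poch x n := (ascPochhammer ℝ n).continuous

lemma div_one_add_mem_Ico {X : ℝ} (hX : 0 ≤ X) : X / (1 + X) ∈ Set.Ico 0 1 :=
  ⟨by positivity, (div_lt_one (by positivity)).2 (by linarith)⟩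

noncomputable def phiTerm (X ε : ℝ) (m : ℕ) : ℝ :=
  poch (ε / 2) m * poch (1 - ε / 2) m / (poch (3 / 2) m * (m ! : ℝ)) * (X / (1 + X)) ^ m

noncomputable def phiTailTerm (X ε : ℝ) (k : ℕ) : ℝ :=
  poch (1 + ε / 2) k * poch (1 - ε / 2) (k + 1) /
    (2 * (poch (3 / 2) (k + 1) * ((k + 1)! : ℝ))) * (X / (1 + X)) ^ (k + 1)

lemma abs_phiTerm_le {X ε : ℝ} (hX : 0 ≤ X) (hε : 0 < ε) (hε₂ : ε < 2) (m : ℕ) :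
    |phiTerm X ε m| ≤ (X / (1 + X)) ^ m := by
  have hζ := div_one_add_mem_Ico hX
  have h₁ : 0 < poch (ε / 2) m := poch_pos (by linarith) m
  have h₂ : 0 < poch (1 - ε / 2) m := poch_pos (by linarith) m
  have h₃ : 0 < poch (3 / 2) m := poch_pos (by norm_num) m
  have hcoeff : poch (ε / 2) m * poch (1 - ε / 2) m ≤ poch (3 / 2) m * m ! :=
    calc _ ≤ poch (3 / 2) m * poch 1 m :=
          mul_le_mul ((poch_le_poch (by linarith) (by linarith) m).trans
            (poch_le_poch one_pos (by norm_num) m)) (poch_le_poch (by linarith) (by linarith) m)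
            h₂.le h₃.le
      _ = _ := by rw [poch_one]
  rw [phiTerm, abs_mul, abs_of_nonneg (pow_nonneg hζ.1 m), abs_of_nonneg (by positivity)]
  exact mul_le_of_le_one_left (pow_nonneg hζ.1 m) (div_le_one_of_le₀ hcoeff (by positivity))

lemma summable_phiTerm {X ε : ℝ} (hX : 0 ≤ X) (hε : 0 < ε) (hε₂ : ε < 2) :
    Summable (phiTerm X ε) :=
  .of_norm_bounded (summable_geometric_of_lt_one (div_one_add_mem_Ico hX).1
    (div_one_add_mem_Ico hX).2) (abs_phiTerm_le hX hε hε₂)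

lemma phiTerm_succ (X ε : ℝ) (k : ℕ) : phiTerm X ε (k + 1) = ε * phiTailTerm X ε k := by
  have : 0 < poch (3 / 2) (k + 1) := poch_pos (by norm_num) (k + 1)
  rw [phiTerm, phiTailTerm, poch_succ', add_comm (ε / 2)]
  field_simp

lemma Phi_eq_one_add {X ε : ℝ} (hX : 0 ≤ X) (hε : 0 < ε) (hε₂ : ε < 2) :
    Phi X ε = 1 + ε * ∑' k, phiTailTerm X ε k := by
  rw [Phi, ← tsum_mul_left]
  simp_rw [← phiTerm_succ]
  simpa [phiTerm, poch_zero] using (summable_phiTerm hX hε hε₂).tsum_eq_zero_add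

lemma abs_phiTailTerm_le {X ε : ℝ} (hX : 0 ≤ X) (hε : 0 < ε) (hε₂ : ε < 2) (k : ℕ) :
    |phiTailTerm X ε k| ≤ (X / (1 + X)) ^ k := by
  have hζ := div_one_add_mem_Ico hX
  have h₁ : 0 < poch (1 + ε / 2) k := poch_pos (by linarith) k
  have h₂ : 0 < poch (1 - ε / 2) (k + 1) := poch_pos (by linarith) _
  have h₃ : 0 < poch (3 / 2) (k + 1) := poch_pos (by norm_num) _
  have hcoeff : poch (1 + ε / 2) k * poch (1 - ε / 2) (k + 1) ≤
      2 * (poch (3 / 2) (k + 1) * (k + 1)!) :=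
    calc _ ≤ poch 2 k * poch (3 / 2) (k + 1) :=
          mul_le_mul (poch_le_poch (by linarith) (by linarith) k)
            ((poch_le_poch (by linarith) (by linarith) _).trans
            (poch_le_poch one_pos (by norm_num) _)) h₂.le (poch_pos two_pos k).le
      _ ≤ 2 * (poch (3 / 2) (k + 1) * (k + 1)!) := by
          rw [poch_two, mul_comm]
          linarith [mul_pos h₃ (Nat.cast_pos.2 (k + 1).factorial_pos)]
  rw [phiTailTerm, abs_mul, abs_of_nonneg (pow_nonneg hζ.1 _), abs_of_nonneg (by positivity)]
  exact (mul_le_of_le_one_left (pow_nonneg hζ.1 _)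
    (div_le_one_of_le₀ hcoeff (by positivity))).trans (pow_le_pow_of_le_one hζ.1 hζ.2.le k.le_succ)

lemma tendsto_tsum_phiTailTerm {X : ℝ} (hX : 0 ≤ X) :
    Tendsto (fun ε => ∑' k, phiTailTerm X ε k) (𝓝[>] 0) (𝓝 (∑' k, phiTailTerm X 0 k)) := by
  refine tendsto_tsum_of_dominated_convergence
    (summable_geometric_of_lt_one (div_one_add_mem_Ico hX).1 (div_one_add_mem_Ico hX).2)
    (fun k => ?_) ?_
  · have : Continuous fun ε => phiTailTerm X ε k := by
      unfold phiTailTerm; fun_prop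
    exact this.continuousAt.tendsto.mono_left nhdsWithin_le_nhds
  · filter_upwards [Ioo_mem_nhdsGT two_pos] with ε hε k
    exact abs_phiTailTerm_le hX hε.1 hε.2 k

lemma hasDerivAt_one_sub_mul_sqrt_one_sub {t : ℝ} (ht : t < 1) :
    HasDerivAt (fun s => -(2 / 3) * ((1 - s) * √(1 - s))) (√(1 - t)) t := by
  have h₀ : 0 < 1 - t := by linarith
  have hsub : HasDerivAt (fun s : ℝ => 1 - s) (-1) t := by
    simpa using (hasDerivAt_id t).const_sub 1
  have hsqrt : HasDerivAt (fun s => √(1 - s)) (1 / (2 * √(1 - t)) * -1) t :=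
    (Real.hasDerivAt_sqrt h₀.ne').comp t hsub
  refine ((hsub.mul hsqrt).const_mul _).congr_deriv ?_
  have : 0 < √(1 - t) := Real.sqrt_pos.2 h₀
  field_simp
  nlinarith [Real.sq_sqrt h₀.le]

lemma integral_sqrt_one_sub : ∫ t in (0 : ℝ)..1, √(1 - t) = 2 / 3 := by
  rw [intervalIntegral.integral_eq_sub_of_hasDerivAt_of_le zero_le_one (by fun_prop)
    (fun t ht => hasDerivAt_one_sub_mul_sqrt_one_sub ht.2)
    (Continuous.intervalIntegrable (by fun_prop) _ _)]
  norm_num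

lemma integral_pow_succ_mul_sqrt_one_sub (k : ℕ) :
    ∫ t in (0 : ℝ)..1, t ^ (k + 1) * √(1 - t) =
      (2 * k + 2) / (2 * k + 5) * ∫ t in (0 : ℝ)..1, t ^ k * √(1 - t) := by
  have ibp := intervalIntegral.integral_mul_deriv_eq_deriv_mul_of_hasDerivAt
    (a := 0) (b := 1) (u := fun t : ℝ => t ^ (k + 1)) (u' := fun t => (k + 1 : ℝ) * t ^ k)
    (by fun_prop) (by fun_prop) (fun t _ => by simpa using hasDerivAt_pow (k + 1) t)
    (fun t ht => hasDerivAt_one_sub_mul_sqrt_one_sub (by simpa using ht.2))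
    (Continuous.intervalIntegrable (by fun_prop) _ _)
    (Continuous.intervalIntegrable (by fun_prop) _ _)
  have hsplit : ∀ t : ℝ, (k + 1 : ℝ) * t ^ k * (-(2 / 3) * ((1 - t) * √(1 - t))) =
      -(2 / 3) * (k + 1) * (t ^ k * √(1 - t) - t ^ (k + 1) * √(1 - t)) := fun t => by ring
  simp only [hsplit, intervalIntegral.integral_const_mul] at ibp
  rw [intervalIntegral.integral_sub (Continuous.intervalIntegrable (by fun_prop) _ _)
    (Continuous.intervalIntegrable (by fun_prop) _ _)] at ibp
  norm_num at ibp
  have : (2 * k + 5 : ℝ) ≠ 0 := by positivity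
  field_simp
  linear_combination 3 * ibp

lemma integral_pow_mul_sqrt_one_sub (k : ℕ) :
    ∫ t in (0 : ℝ)..1, t ^ k * √(1 - t) = k ! / poch (3 / 2) (k + 1) := by
  induction k with
  | zero =>
    simp only [pow_zero, one_mul, integral_sqrt_one_sub, poch_succ, poch_zero]
    norm_num
  | succ k ih =>
    have : 0 < poch (3 / 2) (k + 1) := poch_pos (by norm_num) _
    rw [integral_pow_succ_mul_sqrt_one_sub, ih, poch_succ _ (k + 1), Nat.factorial_succ]
    push_cast
    field_simp
    ring

lemma hasSum_mul_integral_pow_mul_sqrt_one_sub {X : ℝ} (hX : 0 ≤ X) :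
    HasSum (fun k : ℕ => (X / (1 + X)) ^ (k + 1) / 2 * ∫ t in (0 : ℝ)..1, t ^ k * √(1 - t))
      (∫ t in (0 : ℝ)..1, X / 2 * √(1 - t) / (1 + X * (1 - t))) := by
  obtain ⟨hζ₀, hζ₁⟩ := div_one_add_mem_Ico hX
  simp_rw [← intervalIntegral.integral_const_mul]
  refine intervalIntegral.hasSum_integral_of_dominated_convergence
    (fun k _ => (X / (1 + X)) ^ k) (fun k => Continuous.aestronglyMeasurable (by fun_prop))
    (fun k => ?_)
    (.of_forall fun t _ => summable_geometric_of_lt_one hζ₀ hζ₁) intervalIntegrable_const ?_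
  · refine .of_forall fun t ht => ?_
    rw [Set.uIoc_of_le zero_le_one] at ht
    have ht₀ := ht.1.le
    have hmoment : t ^ k * √(1 - t) ≤ 1 :=
      mul_le_one₀ (pow_le_one₀ ht₀ ht.2) (Real.sqrt_nonneg _) (Real.sqrt_le_one.2 (by linarith))
    rw [Real.norm_eq_abs, abs_of_nonneg (by positivity), pow_succ]
    calc _ ≤ (X / (1 + X)) ^ k * 1 / 2 * 1 := by gcongr
      _ ≤ _ := by linarith [pow_nonneg hζ₀ k]
  · refine .of_forall fun t ht => ?_
    rw [Set.uIoc_of_le zero_le_one] at ht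
    have hζt : X / (1 + X) * t < 1 := by nlinarith [ht.1, ht.2]
    have hsum : X / 2 * √(1 - t) / (1 + X * (1 - t)) =
        X / (1 + X) * √(1 - t) / 2 * (1 - X / (1 + X) * t)⁻¹ := by
      have : 0 < 1 + X * (1 - t) := by nlinarith [ht.2]
      have hden : 1 - X / (1 + X) * t = (1 + X * (1 - t)) / (1 + X) := by field_simp; ring
      rw [hden, inv_div]
      field_simp
    rw [hsum]
    refine ((hasSum_geometric_of_lt_one (by have := ht.1; positivity) hζt).mul_left _).congr_fun
      fun k => ?_
    ring

lemma integral_sqrt_one_sub_div {X : ℝ} (hX : 0 < X) :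
    ∫ t in (0 : ℝ)..1, X / 2 * √(1 - t) / (1 + X * (1 - t)) = 1 - arctan √X / √X := by
  have hsX : 0 < √X := Real.sqrt_pos.2 hX
  have hderiv : ∀ t ∈ Set.Ioo (0 : ℝ) 1,
      HasDerivAt (fun s => -√(1 - s) + arctan (√X * √(1 - s)) / √X)
        (X / 2 * √(1 - t) / (1 + X * (1 - t))) t := by
    intro t ht
    have h₀ : 0 < 1 - t := by linarith [ht.2]
    have hsqrt : HasDerivAt (fun s => √(1 - s)) (1 / (2 * √(1 - t)) * -1) t :=
      (Real.hasDerivAt_sqrt h₀.ne').comp t ((hasDerivAt_id t).const_sub 1)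
    refine (hsqrt.neg.add (((hsqrt.const_mul √X).arctan).div_const √X)).congr_deriv ?_
    have : 0 < √(1 - t) := Real.sqrt_pos.2 h₀
    have : 0 < 1 + X * (1 - t) := by nlinarith
    rw [mul_pow, Real.sq_sqrt hX.le, Real.sq_sqrt h₀.le]
    field_simp
    nlinarith [Real.sq_sqrt h₀.le]
  rw [intervalIntegral.integral_eq_sub_of_hasDerivAt_of_le zero_le_one (by fun_prop) hderiv
    (ContinuousOn.intervalIntegrable ?_)]
  · norm_num
    ring
  refine ContinuousOn.div (by fun_prop) (by fun_prop) fun t ht => ?_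
  rw [Set.uIcc_of_le zero_le_one] at ht
  have : 0 ≤ X * (1 - t) := mul_nonneg hX.le (by linarith [ht.2])
  positivity

lemma tsum_phiTailTerm_zero {X : ℝ} (hX : 0 < X) :
    ∑' k, phiTailTerm X 0 k = 1 - arctan √X / √X := by
  have hterm : ∀ k, phiTailTerm X 0 k =
      (X / (1 + X)) ^ (k + 1) / 2 * ∫ t in (0 : ℝ)..1, t ^ k * √(1 - t) := fun k => by
    have : 0 < poch (3 / 2) (k + 1) := poch_pos (by norm_num) _
    rw [phiTailTerm, integral_pow_mul_sqrt_one_sub]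
    norm_num [poch_one]
    field_simp
  rw [tsum_congr hterm, (hasSum_mul_integral_pow_mul_sqrt_one_sub hX.le).tsum_eq,
    integral_sqrt_one_sub_div hX]

lemma hasDerivAt_Gamma_one_add_mul_rpow_neg {b : ℝ} (hb : 0 < b) :
    HasDerivAt (fun ε : ℝ => Gamma (1 + ε) * b ^ (-ε)) (-eulerMascheroniConstant - log b) 0 := by
  have hGamma : HasDerivAt (fun ε : ℝ => Gamma (1 + ε)) (-eulerMascheroniConstant) 0 :=
    (by simpa using hasDerivAt_Gamma_one : HasDerivAt Gamma _ (1 + 0)).comp_const_add 1 0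
  have hpow : HasDerivAt (fun ε : ℝ => b ^ (-ε)) (-log b) 0 := by
    simpa using (hasDerivAt_neg (0 : ℝ)).const_rpow hb
  refine (hGamma.mul hpow).congr_deriv ?_
  simp [sub_eq_add_neg]

lemma tendsto_mul_one_add_mul_sub_one_div {g Q : ℝ → ℝ} {d q : ℝ} (hg : HasDerivAt g d 0)
    (hg₀ : g 0 = 1) (hQ : Tendsto Q (𝓝[>] 0) (𝓝 q)) :
    Tendsto (fun ε => (g ε * (1 + ε * Q ε) - 1) / ε) (𝓝[>] 0) (𝓝 (d + q)) := by
  have hslope : Tendsto (fun ε => (g ε - 1) / ε) (𝓝[>] 0) (𝓝 d) := by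
    refine ((hasDerivAt_iff_tendsto_slope.1 hg).mono_left
      (nhdsWithin_mono 0 fun ε (hε : 0 < ε) => hε.ne')).congr fun ε => ?_
    rw [slope_def_field, hg₀, sub_zero]
  have hcont : Tendsto g (𝓝[>] 0) (𝓝 1) :=
    hg₀ ▸ hg.continuousAt.tendsto.mono_left nhdsWithin_le_nhds
  have hsum := hslope.add (hcont.mul hQ)
  rw [one_mul] at hsum
  refine hsum.congr' ?_
  filter_upwards [self_mem_nhdsWithin] with ε (hε : 0 < ε)
  field_simp
  ring

theorem stmt_19 (X : ℝ) (hX : 0 < X) :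
    (∀ ε : ℝ, 0 < ε → ε < 2 →
      Summable (fun m : ℕ =>
        poch (ε / 2) m * poch (1 - ε / 2) m /
          (poch (3 / 2) m * (Nat.factorial m : ℝ)) * (X / (1 + X)) ^ m)) ∧
    Filter.Tendsto
      (fun ε : ℝ =>
        Real.Gamma (1 + ε) * (16 * Real.pi) ^ (ε - 1) / (2 * Real.pi * ε) *
            (1 + X) ^ (-ε / 2) * Phi X ε -
          1 / (32 * Real.pi ^ 2 * ε))
      (nhdsWithin 0 (Set.Ioi 0))
      (nhds (1 / (32 * Real.pi ^ 2) *
        (1 - Real.eulerMascheroniConstant -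
          Real.log (Real.sqrt (1 + X) / (16 * Real.pi)) -
          Real.arctan (Real.sqrt X) / Real.sqrt X))) := by
  refine ⟨fun ε hε hε₂ => summable_phiTerm hX.le hε hε₂, ?_⟩
  set b := √(1 + X) / (16 * π)
  have hb : 0 < b := by positivity
  have hlim := ((tendsto_mul_one_add_mul_sub_one_div (hasDerivAt_Gamma_one_add_mul_rpow_neg hb)
    (by simp) (tendsto_tsum_phiTailTerm hX.le)).const_mul (1 / (32 * π ^ 2)))
  rw [tsum_phiTailTerm_zero hX] at hlim
  convert hlim.congr' ?_ using 2
  · ring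
  filter_upwards [Ioo_mem_nhdsGT two_pos] with ε ⟨hε, hε₂⟩
  have hrpow : b ^ (-ε) = (16 * π) ^ ε * (1 + X) ^ (-ε / 2) := by
    rw [div_rpow (by positivity) (by positivity), sqrt_eq_rpow, ← rpow_mul (by positivity),
      rpow_neg (by positivity), div_inv_eq_mul, mul_comm]
    ring_nf
  rw [Phi_eq_one_add hX.le hε hε₂, hrpow, rpow_sub_one (by positivity)]
  field_simp
  ring
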